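/- Let F be a field and let E be an n×n matrix, A_xv an n×v matrix, A_zx a z×n matrix, A_zv a z×v matrix, C_x a p×n matrix, C_v a p×v matrix, and Φ̄ a v×z matrix over F, and assume the v×v matrix W = 1 − Φ̄*A_zv is invertible. Then the (n+p+v)×(n+v) matrix [E, 0; −C_x, −C_v; −Φ̄*A_zx, W] is of full column rank if and only if the (n+p)×n matrix [E; C_x + C_v*W⁻¹*Φ̄*A_zx] is of full column rank. -/

import Mathlib

/-!
Eliminating the `v`-block of unknowns: since `W` is invertible, the last block row of
`[E, 0; −C_x, −C_v; −Φ̄ A_zx, W] (x, y) = 0` determines `y = W⁻¹ Φ̄ A_zx x`, and substituting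
into the first two block rows leaves `E x = 0` and `(C_x + C_v W⁻¹ Φ̄ A_zx) x = 0`. So the two
matrices have isomorphic kernels: injectivity passes to the Schur complement of `W`.
-/

open Matrix

namespace Matrix

variable {R : Type*} [CommRing R] {l m n : Type*} [Fintype m] [Fintype n] [DecidableEq n]

theorem injective_mulVecLin_fromBlocks_iff (A : Matrix l m R) (B : Matrix l n R)
    (C : Matrix n m R) {D : Matrix n n R} (hD : IsUnit D) :
    Function.Injective (fromBlocks A B C D).mulVecLin ↔
      Function.Injective (A - B * D⁻¹ * C).mulVecLin := by
  have hD_inv : D⁻¹ * D = 1 := nonsing_inv_mul D ((isUnit_iff_isUnit_det D).mp hD)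
  have hD_inv' : D * D⁻¹ = 1 := mul_nonsing_inv D ((isUnit_iff_isUnit_det D).mp hD)
  have solve (x : m → R) (y : n → R) : C *ᵥ x + D *ᵥ y = 0 ↔ y = -(D⁻¹ * C) *ᵥ x := by
    constructor
    · intro h
      have := congrArg (D⁻¹ *ᵥ ·) h
      simp only [mulVec_add, mulVec_mulVec, hD_inv, one_mulVec, mulVec_zero] at this
      rwa [neg_mulVec, eq_neg_iff_add_eq_zero, add_comm]
    · rintro rfl
      rw [neg_mulVec, mulVec_neg, mulVec_mulVec, ← Matrix.mul_assoc, hD_inv', Matrix.one_mul,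
        add_neg_cancel]
  have reduce (x : m → R) :
      A *ᵥ x + B *ᵥ (-(D⁻¹ * C) *ᵥ x) = (A - B * D⁻¹ * C) *ᵥ x := by
    rw [neg_mulVec, mulVec_neg, mulVec_mulVec, sub_mulVec, Matrix.mul_assoc, sub_eq_add_neg]
  rw [← LinearMap.ker_eq_bot, ← LinearMap.ker_eq_bot, ker_mulVecLin_eq_bot_iff,
    ker_mulVecLin_eq_bot_iff]
  constructor
  · intro h x hx
    have h0 := h (Sum.elim x (-(D⁻¹ * C) *ᵥ x)) (by
      rw [fromBlocks_mulVec, Sum.elim_comp_inl, Sum.elim_comp_inr, reduce, hx,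
        (solve _ _).mpr rfl, Sum.elim_zero_zero])
    exact congrArg (· ∘ Sum.inl) h0
  · intro h u hu
    rw [fromBlocks_mulVec, ← Sum.elim_zero_zero, Sum.elim_eq_iff, solve] at hu
    obtain ⟨hx, hy⟩ := hu
    rw [hy, reduce] at hx
    have hx0 := h _ hx
    rw [← Sum.elim_comp_inl_inr u, hy, hx0, mulVec_zero, Sum.elim_zero_zero]

variable {k : Type*} in
theorem injective_mulVecLin_fromRows_neg_iff (A : Matrix l m R) (B : Matrix k m R) :
    Function.Injective (fromRows A (-B)).mulVecLin ↔
      Function.Injective (fromRows A B).mulVecLin := by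
  simp only [← LinearMap.ker_eq_bot, ker_mulVecLin_eq_bot_iff, fromRows_mulVec, neg_mulVec,
    ← Sum.elim_zero_zero, Sum.elim_eq_iff, neg_eq_zero]

end Matrix

theorem stmt14_general {F : Type*} [Field F] {n v z p : ℕ}
    (E : Matrix (Fin n) (Fin n) F)
    (Azx : Matrix (Fin z) (Fin n) F) (Azv : Matrix (Fin z) (Fin v) F)
    (Cx : Matrix (Fin p) (Fin n) F) (Cv : Matrix (Fin p) (Fin v) F)
    (Φ : Matrix (Fin v) (Fin z) F)
    (hW : IsUnit (1 - Φ * Azv)) :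
    Function.Injective (Matrix.fromRows (Matrix.fromRows
        (Matrix.fromCols E 0)
        (Matrix.fromCols (-Cx) (-Cv)))
        (Matrix.fromCols (-(Φ * Azx)) (1 - Φ * Azv))).mulVecLin ↔
    Function.Injective (Matrix.fromRows
        E (Cx + Cv * (1 - Φ * Azv)⁻¹ * Φ * Azx)).mulVecLin := by
  have schur_complement : fromRows E (-Cx) - fromRows 0 (-Cv) * (1 - Φ * Azv)⁻¹ * -(Φ * Azx) =
      fromRows E (-(Cx + Cv * (1 - Φ * Azv)⁻¹ * Φ * Azx)) := by
    ext (i | i) j <;> simp [Matrix.mul_assoc, sub_eq_add_neg, add_comm]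
  rw [fromRows_fromCols_eq_fromBlocks, ← fromCols_fromRows_eq_fromBlocks,
    fromRows_fromCols_eq_fromBlocks, injective_mulVecLin_fromBlocks_iff _ _ _ hW,
    schur_complement, injective_mulVecLin_fromRows_neg_iff]

/-- With `W = 1 − Φ̄*A_zv` invertible, the matrix
`[E, 0; −C_x, −C_v; −Φ̄*A_zx, W]` is of full column rank iff
`[E; C_x + C_v*W⁻¹*Φ̄*A_zx]` is. -/
theorem stmt14 {F : Type*} [Field F] {n v z p : ℕ}
    (E : Matrix (Fin n) (Fin n) F) (Axv : Matrix (Fin n) (Fin v) F)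
    (Azx : Matrix (Fin z) (Fin n) F) (Azv : Matrix (Fin z) (Fin v) F)
    (Cx : Matrix (Fin p) (Fin n) F) (Cv : Matrix (Fin p) (Fin v) F)
    (Φ : Matrix (Fin v) (Fin z) F)
    (hW : IsUnit (1 - Φ * Azv)) :
    Function.Injective (Matrix.fromRows (Matrix.fromRows
        (Matrix.fromCols E 0)
        (Matrix.fromCols (-Cx) (-Cv)))
        (Matrix.fromCols (-(Φ * Azx)) (1 - Φ * Azv))).mulVecLin ↔
    Function.Injective (Matrix.fromRows
        E (Cx + Cv * (1 - Φ * Azv)⁻¹ * Φ * Azx)).mulVecLin :=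
  stmt14_general E Azx Azv Cx Cv Φ hW
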